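/- Let X be a finite set of distinct points in ℙ¹×ℙ¹ over k satisfying property (*). For P×Q ∈ X, let X_{P,1} be the set of points of X whose first coordinate is P and let X_{Q,2} be the set of points of X whose second coordinate is Q, and set b = |X_{P,1}| and a = |X_{Q,2}|. Then deg_X(P×Q) = {(a−1, b−1)}. -/

import Mathlib

/-!
Restricted to the line `ℙ¹ × {Q}`, a separator of `P×Q` of bidegree `(c, d)` is a binary form of
degree `c` that is nonzero at `P` and vanishes at the `a - 1` other points of `X` on that line;
a nonzero binary form of degree `c` has at most `c` zeros on `ℙ¹`, so `c ≥ a - 1`, and likewise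
`d ≥ b - 1`. Conversely, the product of the `a - 1` linear forms in `x` vanishing at those points
and the `b - 1` linear forms in `y` vanishing at the other points of `X` on `{P} × ℙ¹` separates
`P×Q`: by property (*) every other point of `X` lies on one of these lines.
-/

/-- `ℙ¹` over `k`, as the projectivization of `k²`. -/
abbrev Proj1 (k : Type*) [Field k] := Projectivization k (Fin 2 → k)

/-- The bigraded coordinate ring `R = k[x₀,x₁,y₀,y₁]` of `ℙ¹ × ℙ¹`,
with the `x` variables indexed by `Sum.inl` and the `y` variables by `Sum.inr`. -/
abbrev BiPoly (k : Type*) [Field k] := MvPolynomial (Fin 2 ⊕ Fin 2) k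

variable {k : Type*} [Field k]

/-- `F` is bihomogeneous of bidegree `d = (d₁, d₂)`: every monomial of `F` has total degree
`d₁` in `x₀,x₁` and total degree `d₂` in `y₀,y₁`. -/
def IsBihomogeneous (F : BiPoly k) (d : ℕ × ℕ) : Prop :=
  ∀ m ∈ F.support,
    (∑ i : Fin 2, m (Sum.inl i)) = d.1 ∧ (∑ i : Fin 2, m (Sum.inr i)) = d.2

/-- `F` vanishes at the point `P` of `ℙ¹ × ℙ¹`, i.e. at every pair of representatives. -/
def VanishesAt (F : BiPoly k) (P : Proj1 k × Proj1 k) : Prop :=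
  ∀ (p q : Fin 2 → k) (hp : p ≠ 0) (hq : q ≠ 0),
    Projectivization.mk k p hp = P.1 → Projectivization.mk k q hq = P.2 →
    MvPolynomial.eval (Sum.elim p q) F = 0

/-- `F` is a separator of `P` in `X` of bidegree `d`: it is bihomogeneous of bidegree `d`,
does not vanish at `P`, and vanishes at every other point of `X`. -/
def IsSeparator (X : Finset (Proj1 k × Proj1 k)) (P : Proj1 k × Proj1 k)
    (F : BiPoly k) (d : ℕ × ℕ) : Prop :=
  IsBihomogeneous F d ∧ ¬ VanishesAt F P ∧ ∀ Q ∈ X, Q ≠ P → VanishesAt F Q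

/-- The set of bidegrees of separators of `P` in `X`. -/
def sepDegrees (X : Finset (Proj1 k × Proj1 k)) (P : Proj1 k × Proj1 k) : Set (ℕ × ℕ) :=
  {d | ∃ F : BiPoly k, IsSeparator X P F d}

/-- `deg_X(P)`: the set of minimal elements, with respect to the componentwise partial
order on `ℕ × ℕ`, of the set of bidegrees of separators of `P` in `X`. -/
def degSet (X : Finset (Proj1 k × Proj1 k)) (P : Proj1 k × Proj1 k) : Set (ℕ × ℕ) :=
  {d | d ∈ sepDegrees X P ∧ ∀ e ∈ sepDegrees X P, e ≤ d → e = d}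

/-- The ideal `I_X` of all polynomials vanishing at (every representative of)
every point of `X`. -/
noncomputable def vanishingIdeal (X : Finset (Proj1 k × Proj1 k)) : Ideal (BiPoly k) where
  carrier := {F | ∀ P ∈ X, VanishesAt F P}
  zero_mem' := by
    intro P _ p q hp hq _ _
    simp
  add_mem' := by
    intro F G hF hG P hP p q hp hq h1 h2
    have h := hF P hP p q hp hq h1 h2
    have h' := hG P hP p q hp hq h1 h2
    simp [h, h']
  smul_mem' := by
    intro c F hF P hP p q hp hq h1 h2
    have h := hF P hP p q hp hq h1 h2
    simp [smul_eq_mul, h]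

/-- Property (*): whenever `P×Q, P'×Q' ∈ X` with `P ≠ P'` and `Q ≠ Q'`, at least one of
`P×Q'` and `P'×Q` is in `X`. -/
def PropertyStar (X : Finset (Proj1 k × Proj1 k)) : Prop :=
  ∀ P Q P' Q' : Proj1 k, (P, Q) ∈ X → (P', Q') ∈ X → P ≠ P' → Q ≠ Q' →
    (P, Q') ∈ X ∨ (P', Q) ∈ X

/-- The depth of a commutative ring `A` with respect to an ideal `m`: the supremum of the
lengths of regular sequences on `A` consisting of elements of `m`. -/
noncomputable def depthWrt (A : Type*) [CommRing A] (m : Ideal A) : ℕ :=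
  sSup {n | ∃ rs : List A, rs.length = n ∧ (∀ r ∈ rs, r ∈ m) ∧
    RingTheory.Sequence.IsRegular A rs}

/-- The irrelevant maximal ideal `(x₀,x₁,y₀,y₁)` of `R/I_X`. -/
noncomputable def irrelevantIdeal (X : Finset (Proj1 k × Proj1 k)) :
    Ideal (BiPoly k ⧸ vanishingIdeal X) :=
  (Ideal.span (Set.range (MvPolynomial.X : (Fin 2 ⊕ Fin 2) → BiPoly k))).map
    (Ideal.Quotient.mk (vanishingIdeal X))

/-- `X` is arithmetically Cohen–Macaulay: `depth (R/I_X) = 2`. -/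
def IsACM (X : Finset (Proj1 k × Proj1 k)) : Prop :=
  depthWrt (BiPoly k ⧸ vanishingIdeal X) (irrelevantIdeal X) = 2

open Classical in
/-- The number of points of `X` with first coordinate `P` (the cardinality of `X_{P,1}`). -/
noncomputable def fiber1Card (X : Finset (Proj1 k × Proj1 k)) (P : Proj1 k) : ℕ :=
  (X.filter fun T => T.1 = P).card

open Classical in
/-- The number of points of `X` with second coordinate `Q` (the cardinality of `X_{Q,2}`). -/
noncomputable def fiber2Card (X : Finset (Proj1 k × Proj1 k)) (Q : Proj1 k) : ℕ :=
  (X.filter fun T => T.2 = Q).card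

open Classical in
/-- The number of distinct first coordinates of points of `X`, i.e. `|π₁(X)|`. -/
noncomputable def proj1Card (X : Finset (Proj1 k × Proj1 k)) : ℕ :=
  (X.image Prod.fst).card

open Classical in
/-- The number of distinct second coordinates of points of `X`, i.e. `|π₂(X)|`. -/
noncomputable def proj2Card (X : Finset (Proj1 k × Proj1 k)) : ℕ :=
  (X.image Prod.snd).card

open MvPolynomial

theorem Projectivization.mk_eq_mk_iff_det_eq_zero {K : Type*} [Field K] {v w : Fin 2 → K}
    (hv : v ≠ 0) (hw : w ≠ 0) : mk K v hv = mk K w hw ↔ v 0 * w 1 - v 1 * w 0 = 0 := by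
  rw [← not_iff_not, ← ne_eq, ← independent_pair_iff_ne, independent_mk_iff_LinearIndependent,
    ← Matrix.det_fin_two_of, ← ne_eq, ← isUnit_iff_ne_zero, ← Matrix.isUnit_iff_isUnit_det,
    ← Matrix.linearIndependent_rows_iff_isUnit]
  congr!
  ext i j
  fin_cases i <;> fin_cases j <;> rfl

theorem MvPolynomial.eval_aeval {σ τ R : Type*} [CommSemiring R] (g : σ → MvPolynomial τ R)
    (v : τ → R) (F : MvPolynomial σ R) :
    eval v (aeval g F) = eval (fun i => eval v (g i)) F := by
  rw [aeval_eq_bind₁, eval, eval₂Hom_bind₁]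
  rfl

theorem MvPolynomial.IsWeightedHomogeneous.isHomogeneous_aeval {σ τ R M : Type*}
    [CommSemiring R] [AddCommMonoid M] {w : σ → M} {F : MvPolynomial σ R} {n : M}
    (hF : IsWeightedHomogeneous w F n) (f : M →+ ℕ) {g : σ → MvPolynomial τ R}
    (hg : ∀ i, (g i).IsHomogeneous (f (w i))) : (aeval g F).IsHomogeneous (f n) := by
  rw [aeval_def, eval₂_eq]
  refine IsHomogeneous.sum _ _ _ fun m hm => ?_
  have hwm : f n = ∑ i ∈ m.support, f (w i) * m i := by
    rw [← hF (mem_support_iff.mp hm), Finsupp.weight_apply, Finsupp.sum, map_sum]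
    simp [mul_comm]
  rw [hwm, ← zero_add (∑ i ∈ m.support, _)]
  exact (isHomogeneous_C _ _).mul (IsHomogeneous.prod _ _ _ fun i _ => (hg i).pow (m i))

section BinaryForm

variable {K : Type*} [Field K]

noncomputable def dehomogenize (G : MvPolynomial (Fin 2) K) : Polynomial K :=
  aeval ![Polynomial.X, 1] G

theorem eval_dehomogenize (G : MvPolynomial (Fin 2) K) (t : K) :
    (dehomogenize G).eval t = eval ![t, 1] G := by
  rw [dehomogenize, ← Polynomial.coe_aeval_eq_eval, ← AlgHom.comp_apply, comp_aeval,
    aeval_eq_eval]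
  congr 2
  funext i
  fin_cases i <;> simp

theorem natDegree_dehomogenize_le {G : MvPolynomial (Fin 2) K} {c : ℕ}
    (hG : G.IsHomogeneous c) : (dehomogenize G).natDegree ≤ c := by
  rw [dehomogenize, G.as_sum, map_sum]
  refine Polynomial.natDegree_sum_le_of_forall_le _ _ fun m hm => ?_
  have hm' : m 0 + m 1 = c := by
    simpa [Finsupp.weight_apply, Finsupp.sum_fintype] using hG (mem_support_iff.mp hm)
  rw [aeval_monomial, Finsupp.prod_fintype _ _ (by simp), Fin.prod_univ_two]
  simp only [Matrix.cons_val_zero, Matrix.cons_val_one, one_pow, mul_one,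
    ← Polynomial.C_eq_algebraMap]
  exact (Polynomial.natDegree_C_mul_X_pow_le _ _).trans (by omega)

theorem homogenize_dehomogenize {G : MvPolynomial (Fin 2) K} {c : ℕ} (hG : G.IsHomogeneous c) :
    (dehomogenize G).homogenize c = G :=
  Polynomial.homogenize_eq_of_isHomogeneous hG rfl

theorem eval_one_zero_eq_coeff_dehomogenize {G : MvPolynomial (Fin 2) K} {c : ℕ}
    (hG : G.IsHomogeneous c) : eval ![1, 0] G = (dehomogenize G).coeff c := by
  conv_lhs => rw [← homogenize_dehomogenize hG]
  simp [Polynomial.homogenize, eval_monomial, Finset.Nat.sum_antidiagonal_eq_sum_range_succ_mk,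
    Finset.sum_range_succ]
  exact Finset.sum_eq_zero fun i hi => by simp [Nat.sub_ne_zero_of_lt (Finset.mem_range.mp hi)]

/-- Zeros of `G` at the affine points `[t : 1]` of `ℙ¹` are roots of `dehomogenize G`; the point
at infinity `[1 : 0]` is a zero only if `dehomogenize G` has degree `< c`. -/
theorem card_le_of_isHomogeneous {G : MvPolynomial (Fin 2) K} {c : ℕ} (hG : G.IsHomogeneous c)
    (hG₀ : G ≠ 0) (S : Finset (Projectivization K (Fin 2 → K)))
    (hS : ∀ s ∈ S, ∀ v (hv : v ≠ 0), Projectivization.mk K v hv = s → eval v G = 0) :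
    S.card ≤ c := by
  classical
  have hdeg := natDegree_dehomogenize_le hG
  have hp₀ : dehomogenize G ≠ 0 := fun hp => hG₀ <| by
    rw [← homogenize_dehomogenize hG, hp, Polynomial.homogenize_zero]
  let e := OnePoint.equivProjectivization K
  have hsub : S ⊆ (dehomogenize G).roots.toFinset.image (fun t : K => e t) ∪
      if (dehomogenize G).coeff c = 0 then {e OnePoint.infty} else ∅ := by
    intro s hs
    obtain ⟨x, rfl⟩ := e.surjective s
    induction x using OnePoint.rec with
    | infty =>
      have h := hS _ hs ![1, 0] (by simp) rfl
      rw [eval_one_zero_eq_coeff_dehomogenize hG] at h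
      simp [h]
    | coe t =>
      have h := hS _ hs ![t, 1] (by simp) rfl
      rw [← eval_dehomogenize] at h
      simp [hp₀, h]
  calc S.card ≤ _ := Finset.card_le_card hsub
    _ ≤ (dehomogenize G).natDegree + if (dehomogenize G).coeff c = 0 then 1 else 0 := by
      refine (Finset.card_union_le _ _).trans (add_le_add ?_ ?_)
      · exact Finset.card_image_le.trans <|
          (Multiset.toFinset_card_le _).trans (Polynomial.card_roots' _)
      · split_ifs <;> simp
    _ ≤ c := by
      split_ifs with hc
      · have : (dehomogenize G).natDegree ≠ c := fun h =>
          hp₀ (Polynomial.leadingCoeff_eq_zero.mp (by rwa [Polynomial.leadingCoeff, h]))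
        omega
      · simpa using hdeg

end BinaryForm

section LineForm

variable {K σ : Type*} [Field K]

noncomputable def lineForm (P : Projectivization K (Fin 2 → K)) (x : Fin 2 → σ) :
    MvPolynomial σ K :=
  C (P.rep 1) * X (x 0) - C (P.rep 0) * X (x 1)

theorem eval_lineForm_eq_zero_iff (P : Projectivization K (Fin 2 → K)) {x : Fin 2 → σ}
    {g : σ → K} {v : Fin 2 → K} (hv : v ≠ 0) (hgv : g ∘ x = v) :
    eval g (lineForm P x) = 0 ↔ Projectivization.mk K v hv = P := by
  subst hgv
  rw [← Projectivization.mk_rep P, Projectivization.mk_eq_mk_iff_det_eq_zero]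
  simp [lineForm, mul_comm]

theorem eval_prod_lineForm_eq_zero_iff {ι : Type*} {s : Finset ι}
    {P : ι → Projectivization K (Fin 2 → K)} {x : Fin 2 → σ} {g : σ → K} {v : Fin 2 → K}
    (hv : v ≠ 0) (hgv : g ∘ x = v) :
    eval g (∏ i ∈ s, lineForm (P i) x) = 0 ↔ ∃ i ∈ s, Projectivization.mk K v hv = P i := by
  simp only [map_prod, Finset.prod_eq_zero_iff, eval_lineForm_eq_zero_iff _ hv hgv]

theorem isWeightedHomogeneous_lineForm {M : Type*} [AddCommMonoid M] {w : σ → M} {e : M}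
    (P : Projectivization K (Fin 2 → K)) {x : Fin 2 → σ} (hx : ∀ i, w (x i) = e) :
    IsWeightedHomogeneous w (lineForm P x) e := by
  rw [lineForm, ← zero_add e]
  refine .sub (.mul (isWeightedHomogeneous_C w _) ?_) (.mul (isWeightedHomogeneous_C w _) ?_) <;>
    exact hx _ ▸ isWeightedHomogeneous_X K w _

theorem isWeightedHomogeneous_prod_lineForm {ι M : Type*} [AddCommMonoid M] {w : σ → M} {e : M}
    (s : Finset ι) (P : ι → Projectivization K (Fin 2 → K)) {x : Fin 2 → σ}
    (hx : ∀ i, w (x i) = e) : IsWeightedHomogeneous w (∏ i ∈ s, lineForm (P i) x) (s.card • e) := by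
  simpa using IsWeightedHomogeneous.prod s _ (fun _ => e) fun i _ =>
    isWeightedHomogeneous_lineForm (P i) hx

end LineForm

def bidegreeWeight : Fin 2 ⊕ Fin 2 → ℕ × ℕ :=
  Sum.elim (fun _ => (1, 0)) (fun _ => (0, 1))

theorem isBihomogeneous_iff_isWeightedHomogeneous {F : BiPoly k} {d : ℕ × ℕ} :
    IsBihomogeneous F d ↔ IsWeightedHomogeneous bidegreeWeight F d := by
  have hweight : ∀ m : Fin 2 ⊕ Fin 2 →₀ ℕ, Finsupp.weight bidegreeWeight m =
      (∑ i : Fin 2, m (Sum.inl i), ∑ i : Fin 2, m (Sum.inr i)) := by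
    intro m
    simp [Finsupp.weight_apply, Finsupp.sum_fintype, Fintype.sum_sum_type, bidegreeWeight,
      Prod.ext_iff]
  simp only [IsBihomogeneous, IsWeightedHomogeneous, hweight, mem_support_iff, Prod.ext_iff]

theorem PropertyStar.corner_mem_of_ne {X : Finset (Proj1 k × Proj1 k)}
    (hstar : PropertyStar X) {P Q P' Q' : Proj1 k} (hPQ : (P, Q) ∈ X) (hPQ' : (P', Q') ∈ X)
    (hne : (P', Q') ≠ (P, Q)) : (P' ≠ P ∧ (P', Q) ∈ X) ∨ (Q' ≠ Q ∧ (P, Q') ∈ X) := by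
  by_cases hP : P' = P
  · subst hP
    exact .inr ⟨fun hQ => hne (by rw [hQ]), hPQ'⟩
  by_cases hQ : Q' = Q
  · subst hQ
    exact .inl ⟨hP, hPQ'⟩
  rcases hstar P Q P' Q' hPQ hPQ' (Ne.symm hP) (Ne.symm hQ) with h | h
  exacts [.inr ⟨hQ, h⟩, .inl ⟨hP, h⟩]

section Separator

open Classical

variable (X : Finset (Proj1 k × Proj1 k)) (P Q : Proj1 k)

noncomputable def starSeparator : BiPoly k :=
  (∏ T ∈ (X.filter fun T => T.2 = Q).erase (P, Q), lineForm T.1 Sum.inl) *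
    ∏ T ∈ (X.filter fun T => T.1 = P).erase (P, Q), lineForm T.2 Sum.inr

variable {X P Q}

theorem isSeparator_starSeparator (hstar : PropertyStar X) (hPQ : (P, Q) ∈ X) :
    IsSeparator X (P, Q) (starSeparator X P Q) (fiber2Card X Q - 1, fiber1Card X P - 1) := by
  set S₂ := (X.filter fun T => T.2 = Q).erase (P, Q)
  set S₁ := (X.filter fun T => T.1 = P).erase (P, Q)
  have hcard₂ : S₂.card = fiber2Card X Q - 1 :=
    Finset.card_erase_of_mem (Finset.mem_filter.mpr ⟨hPQ, rfl⟩)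
  have hcard₁ : S₁.card = fiber1Card X P - 1 :=
    Finset.card_erase_of_mem (Finset.mem_filter.mpr ⟨hPQ, rfl⟩)
  refine ⟨?_, ?_, ?_⟩
  · have h := (isWeightedHomogeneous_prod_lineForm (w := bidegreeWeight) (e := (1, 0)) S₂
      Prod.fst (x := Sum.inl) fun _ => rfl).mul
        (isWeightedHomogeneous_prod_lineForm (w := bidegreeWeight) (e := (0, 1)) S₁
          Prod.snd (x := Sum.inr) fun _ => rfl)
    rw [hcard₂, hcard₁] at h
    rw [isBihomogeneous_iff_isWeightedHomogeneous, starSeparator]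
    simpa using h
  · intro hvan
    have h := hvan P.rep Q.rep P.rep_nonzero Q.rep_nonzero P.mk_rep Q.mk_rep
    rw [starSeparator, map_mul, mul_eq_zero,
      eval_prod_lineForm_eq_zero_iff P.rep_nonzero (Sum.elim_comp_inl _ _),
      eval_prod_lineForm_eq_zero_iff Q.rep_nonzero (Sum.elim_comp_inr _ _)] at h
    rcases h with ⟨T, hT, hP⟩ | ⟨T, hT, hQ⟩
    · rw [P.mk_rep] at hP
      simp [hP, Prod.ext_iff] at hT
      exact hT.1 hT.2.2
    · rw [Q.mk_rep] at hQ
      simp [hQ, Prod.ext_iff] at hT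
      exact hT.1 hT.2.2
  · rintro ⟨P', Q'⟩ hT hne p q hp hq hp' hq'
    rw [starSeparator, map_mul]
    rcases hstar.corner_mem_of_ne hPQ hT hne with ⟨hP', hmem⟩ | ⟨hQ', hmem⟩
    · refine mul_eq_zero_of_left ((eval_prod_lineForm_eq_zero_iff hp
        (Sum.elim_comp_inl _ _)).mpr ⟨(P', Q), ?_, hp'⟩) _
      simp [hP', hmem]
    · refine mul_eq_zero_of_right _ ((eval_prod_lineForm_eq_zero_iff hq
        (Sum.elim_comp_inr _ _)).mpr ⟨(P, Q'), ?_, hq'⟩)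
      simp [hQ', hmem]

end Separator

section LowerBound

open Classical

theorem card_image_fst_filter_snd_eq (X : Finset (Proj1 k × Proj1 k)) (Q : Proj1 k) :
    ((X.filter fun T => T.2 = Q).image Prod.fst).card = fiber2Card X Q :=
  Finset.card_image_of_injOn fun _ hT _ hT' h =>
    Prod.ext h ((Finset.mem_filter.mp hT).2.trans (Finset.mem_filter.mp hT').2.symm)

theorem card_image_snd_filter_fst_eq (X : Finset (Proj1 k × Proj1 k)) (P : Proj1 k) :
    ((X.filter fun T => T.1 = P).image Prod.snd).card = fiber1Card X P :=
  Finset.card_image_of_injOn fun _ hT _ hT' h =>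
    Prod.ext ((Finset.mem_filter.mp hT).2.trans (Finset.mem_filter.mp hT').2.symm) h

variable {X : Finset (Proj1 k × Proj1 k)} {P Q : Proj1 k}

theorem IsSeparator.fiber2Card_sub_one_le {F : BiPoly k} {c d : ℕ} (hPQ : (P, Q) ∈ X)
    (hF : IsSeparator X (P, Q) F (c, d)) : fiber2Card X Q - 1 ≤ c := by
  obtain ⟨hbih, hnv, hvan⟩ := hF
  simp only [VanishesAt, not_forall] at hnv
  obtain ⟨u, q, hu, hq, hu', hq', hFuq⟩ := hnv
  set G : MvPolynomial (Fin 2) k := aeval (Sum.elim MvPolynomial.X (C ∘ q)) F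
  have hG : G.IsHomogeneous c :=
    (isBihomogeneous_iff_isWeightedHomogeneous.mp hbih).isHomogeneous_aeval
      (AddMonoidHom.fst ℕ ℕ) (by rintro (i | i) <;> simp [bidegreeWeight, isHomogeneous_X,
        isHomogeneous_C])
  have hGeval (v : Fin 2 → k) : eval v G = eval (Sum.elim v q) F := by
    rw [eval_aeval]
    congr 2
    funext i
    cases i <;> simp
  have hmem : P ∈ (X.filter fun T => T.2 = Q).image Prod.fst :=
    Finset.mem_image.mpr ⟨(P, Q), Finset.mem_filter.mpr ⟨hPQ, rfl⟩, rfl⟩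
  rw [← card_image_fst_filter_snd_eq, ← Finset.card_erase_of_mem hmem]
  refine card_le_of_isHomogeneous hG (fun h => hFuq ?_) _ ?_
  · rw [← hGeval, h, map_zero]
  · simp only [Finset.mem_erase, Finset.mem_image, Finset.mem_filter]
    rintro _ ⟨hne, ⟨P', Q'⟩, ⟨hT, rfl⟩, rfl⟩ v hv rfl
    rw [hGeval]
    exact hvan _ hT (by simpa using hne) v q hv hq rfl hq'

theorem IsSeparator.fiber1Card_sub_one_le {F : BiPoly k} {c d : ℕ} (hPQ : (P, Q) ∈ X)
    (hF : IsSeparator X (P, Q) F (c, d)) : fiber1Card X P - 1 ≤ d := by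
  obtain ⟨hbih, hnv, hvan⟩ := hF
  simp only [VanishesAt, not_forall] at hnv
  obtain ⟨u, q, hu, hq, hu', hq', hFuq⟩ := hnv
  set G : MvPolynomial (Fin 2) k := aeval (Sum.elim (C ∘ u) MvPolynomial.X) F
  have hG : G.IsHomogeneous d :=
    (isBihomogeneous_iff_isWeightedHomogeneous.mp hbih).isHomogeneous_aeval
      (AddMonoidHom.snd ℕ ℕ) (by rintro (i | i) <;> simp [bidegreeWeight, isHomogeneous_X,
        isHomogeneous_C])
  have hGeval (v : Fin 2 → k) : eval v G = eval (Sum.elim u v) F := by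
    rw [eval_aeval]
    congr 2
    funext i
    cases i <;> simp
  have hmem : Q ∈ (X.filter fun T => T.1 = P).image Prod.snd :=
    Finset.mem_image.mpr ⟨(P, Q), Finset.mem_filter.mpr ⟨hPQ, rfl⟩, rfl⟩
  rw [← card_image_snd_filter_fst_eq, ← Finset.card_erase_of_mem hmem]
  refine card_le_of_isHomogeneous hG (fun h => hFuq ?_) _ ?_
  · rw [← hGeval, h, map_zero]
  · simp only [Finset.mem_erase, Finset.mem_image, Finset.mem_filter]
    rintro _ ⟨hne, ⟨P', Q'⟩, ⟨hT, rfl⟩, rfl⟩ v hv rfl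
    rw [hGeval]
    exact hvan _ hT (by simpa using hne) u v hu hv hu' rfl

end LowerBound

theorem degSet_eq_singleton {X : Finset (Proj1 k × Proj1 k)} {P : Proj1 k × Proj1 k}
    {d : ℕ × ℕ} (hd : d ∈ sepDegrees X P) (hmin : ∀ e ∈ sepDegrees X P, d ≤ e) :
    degSet X P = {d} := by
  ext e
  refine ⟨fun ⟨he, hmin'⟩ => (hmin' d hd (hmin e he)).symm, ?_⟩
  rintro rfl
  exact ⟨hd, fun e he hle => le_antisymm hle (hmin e he)⟩

theorem degree_of_point_in_star_set_general
    (X : Finset (Proj1 k × Proj1 k)) (hstar : PropertyStar X)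
    (P Q : Proj1 k) (hPQ : (P, Q) ∈ X) (a b : ℕ)
    (ha : a = fiber2Card X Q) (hb : b = fiber1Card X P) :
    degSet X (P, Q) = {(a - 1, b - 1)} := by
  subst ha hb
  refine degSet_eq_singleton ⟨_, isSeparator_starSeparator hstar hPQ⟩ ?_
  rintro ⟨c, d⟩ ⟨F, hF⟩
  exact ⟨hF.fiber2Card_sub_one_le hPQ, hF.fiber1Card_sub_one_le hPQ⟩

/-- If `X` satisfies property (*) and `P×Q ∈ X`, then `deg_X(P×Q) = {(a-1, b-1)}`
where `a = |X_{Q,2}|` and `b = |X_{P,1}|`. -/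
theorem degree_of_point_in_star_set [IsAlgClosed k] [CharZero k]
    (X : Finset (Proj1 k × Proj1 k)) (hstar : PropertyStar X)
    (P Q : Proj1 k) (hPQ : (P, Q) ∈ X) (a b : ℕ)
    (ha : a = fiber2Card X Q) (hb : b = fiber1Card X P) :
    degSet X (P, Q) = {(a - 1, b - 1)} :=
  degree_of_point_in_star_set_general X hstar P Q hPQ a b ha hb
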